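/- Let k(x,x') = exp(-‖x-x'‖₂²/(2σ²)) be the Gaussian kernel on ℝ^d and ω ~ N(0, σ⁻²I_d), b ~ Uniform[0,2π]. Then E_{ω,b}[2 cos(ωᵀx + b) cos(ωᵀx' + b)] = k(x,x'). -/

import Mathlib

/-!
Product-to-sum turns `2 cos (u + b) cos (v + b)` into `cos (u - v) + cos (2 b + u + v)`, and the
second term averages to zero over a full period of `b`. What remains is `E cos (ωᵀ (x - x'))`,
the real part of the characteristic function of `ω`; since the coordinates of `ω` are independent,
it factors into one-dimensional Gaussian characteristic functions `exp (-σ⁻² (xᵢ - x'ᵢ)² / 2)`.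
-/

open MeasureTheory ProbabilityTheory

section Trigonometric

open Real

lemma two_mul_cos_add_mul_cos_add (u v b : ℝ) :
    2 * cos (u + b) * cos (v + b) = cos (u - v) + cos (2 * b + (u + v)) := by
  rw [cos_add_cos, ← cos_neg ((u - v - (2 * b + (u + v))) / 2)]
  ring_nf

lemma integral_cos_two_mul_add_eq_zero (c : ℝ) : ∫ b in (0)..2 * π, cos (2 * b + c) = 0 := by
  rw [intervalIntegral.integral_comp_mul_add cos two_ne_zero, integral_cos, smul_eq_mul]
  have : 2 * (2 * π) + c = c + 2 * π + 2 * π := by ring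
  simp [this]

lemma integral_two_mul_cos_add_mul_cos_add_uniform (u v : ℝ) :
    ∫ b, 2 * cos (u + b) * cos (v + b)
        ∂((ENNReal.ofReal (2 * π))⁻¹ • volume.restrict (Set.Icc 0 (2 * π))) = cos (u - v) := by
  have hπ : 0 < 2 * π := by positivity
  rw [integral_smul_measure, ENNReal.toReal_inv, ENNReal.toReal_ofReal hπ.le,
    integral_Icc_eq_integral_Ioc, ← intervalIntegral.integral_of_le hπ.le]
  simp_rw [two_mul_cos_add_mul_cos_add]
  rw [intervalIntegral.integral_add intervalIntegrable_const
      ((by fun_prop : Continuous fun b ↦ cos (2 * b + (u + v))).intervalIntegrable _ _),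
    integral_cos_two_mul_add_eq_zero, intervalIntegral.integral_const, smul_eq_mul]
  field_simp
  ring

end Trigonometric

lemma integral_cos_sum_mul_pi_eq_re_prod_charFun {ι : Type*} [Fintype ι] (μ : ι → Measure ℝ)
    [∀ i, IsFiniteMeasure (μ i)] (t : ι → ℝ) :
    ∫ ω, Real.cos (∑ i, ω i * t i) ∂Measure.pi μ = (∏ i, charFun (μ i) (t i)).re := by
  have hcos (ω : ι → ℝ) :
      Real.cos (∑ i, ω i * t i) = (∏ i, Complex.exp (t i * ω i * Complex.I)).re := by
    rw [← Complex.exp_sum, ← Complex.exp_ofReal_mul_I_re]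
    push_cast
    simp_rw [Finset.sum_mul, mul_comm (t _ : ℂ)]
  have hint : Integrable (fun ω : ι → ℝ ↦ ∏ i, Complex.exp (t i * ω i * Complex.I))
      (Measure.pi μ) := by
    refine Integrable.of_bound (C := 1) (Continuous.aestronglyMeasurable (by fun_prop))
      (ae_of_all _ fun ω ↦ ?_)
    simp [norm_prod, Complex.norm_exp]
  simp_rw [hcos, charFun_apply_real]
  rw [← integral_fintype_prod_eq_prod (fun i (x : ℝ) ↦ Complex.exp (t i * x * Complex.I)),
    ← RCLike.re_eq_complex_re, ← integral_re hint]

lemma charFun_gaussianReal_zero (v : NNReal) (t : ℝ) :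
    charFun (gaussianReal 0 v) t = Real.exp (-(v * t ^ 2 / 2)) := by
  rw [charFun_gaussianReal]
  push_cast
  congr 1
  ring

theorem rff_cos_shift_unbiased (d : ℕ) (σ : ℝ) (x x' : Fin d → ℝ) :
    (∫ ω : Fin d → ℝ,
        (∫ b : ℝ,
            2 * Real.cos ((∑ i, ω i * x i) + b) * Real.cos ((∑ i, ω i * x' i) + b)
          ∂((ENNReal.ofReal (2 * Real.pi))⁻¹ •
              volume.restrict (Set.Icc (0 : ℝ) (2 * Real.pi))))
      ∂(Measure.pi fun _ : Fin d => gaussianReal 0 ⟨σ⁻¹ ^ 2, by positivity⟩))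
      = Real.exp (-(∑ i, (x i - x' i) ^ 2) / (2 * σ ^ 2)) := by
  set v : NNReal := ⟨σ⁻¹ ^ 2, by positivity⟩
  simp_rw [integral_two_mul_cos_add_mul_cos_add_uniform, ← Finset.sum_sub_distrib, ← mul_sub,
    integral_cos_sum_mul_pi_eq_re_prod_charFun, charFun_gaussianReal_zero]
  rw [← Complex.ofReal_prod, Complex.ofReal_re, ← Real.exp_sum, neg_div, Finset.sum_div,
    ← Finset.sum_neg_distrib]
  refine congrArg Real.exp (Finset.sum_congr rfl fun i _ ↦ ?_)
  rw [show (v : ℝ) = σ⁻¹ ^ 2 from rfl, inv_pow]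
  ring
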